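/- For every real δ with 0 < δ ≤ 1/2, all reals a, b with δ ≤ a < b ≤ 1 − δ, and every integer n ≥ 1, the sum over those integers k with a·n ≤ k ≤ b·n satisfies |Σ_{a ≤ k/n ≤ b} p_{2k,2n} − Σ_{a ≤ k/n ≤ b} d_{k,n}| ≤ 1/(3·π·n·(δ(1−δ))^{3/2}). -/

import Mathlib

/-!
Write `u m = C(2m, m) / 4^m`, so that `p_{2k,2n} = u k * u (n - k)`. Wallis' formula gives
`u m ^ 2 = 1 / (W m * (2m + 1))` with `(2m+1)/(2m+2) * π/2 ≤ W m ≤ π/2`, hence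
`1 / (π (m + 1/2)) ≤ u m ^ 2 ≤ 1 / (π m)`. Therefore `p_{2k,2n}` lies between
`1 / (π √((k + 1/2)(n - k + 1/2)))` and `d_{k,n}`, and convexity of `x ↦ x^(-1/2)` bounds
the gap by `(2n + 1) / (8π (k(n - k))^(3/2))`. For `δn ≤ k ≤ (1 - δ)n` we have
`k(n - k) ≥ δ(1 - δ)n²`, and there are at most `n - 1` such `k`, which gives the total error
`(n - 1)(2n + 1) / (8πn³ (δ(1 - δ))^(3/2))`.
-/

open Real
open scoped Nat

lemma one_div_sqrt_sub_one_div_sqrt_le {x y : ℝ} (hx : 0 < x) (hxy : x ≤ y) :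
    1 / √x - 1 / √y ≤ (y - x) / (2 * (x * √x)) := by
  obtain ⟨a, ha, rfl⟩ : ∃ a, 0 < a ∧ a ^ 2 = x := ⟨√x, sqrt_pos.2 hx, sq_sqrt hx.le⟩
  obtain ⟨b, hb, rfl⟩ : ∃ b, 0 < b ∧ b ^ 2 = y :=
    ⟨√y, sqrt_pos.2 (hx.trans_le hxy), sq_sqrt (hx.trans_le hxy).le⟩
  have hab : a ≤ b := (pow_le_pow_iff_left₀ ha.le hb.le two_ne_zero).1 hxy
  rw [sqrt_sq ha.le, sqrt_sq hb.le, div_sub_div _ _ ha.ne' hb.ne',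
    div_le_div_iff₀ (by positivity) (by positivity)]
  nlinarith [mul_nonneg (sub_nonneg.2 hab) (mul_nonneg ha.le (sub_nonneg.2 hab)),
    mul_nonneg (sub_nonneg.2 hab) (mul_nonneg ha.le ha.le)]

lemma one_div_sqrt_pi_mul_mul_one_div_sqrt_pi_mul {u v : ℝ} (hu : 0 ≤ u) :
    1 / √(π * u) * (1 / √(π * v)) = 1 / (π * √(u * v)) := by
  rw [one_div_mul_one_div, ← sqrt_mul (by positivity),
    show π * u * (π * v) = π ^ 2 * (u * v) by ring, sqrt_mul (sq_nonneg π), sqrt_sq pi_pos.le]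

namespace Nat

lemma sq_centralBinom_div_four_pow (m : ℕ) :
    ((m.centralBinom : ℝ) / 4 ^ m) ^ 2 = 1 / (Wallis.W m * (2 * m + 1)) := by
  have hcast : (m.centralBinom : ℝ) = (2 * m)! / (m ! * m !) := by
    rw [centralBinom, cast_choose ℝ (by omega : m ≤ 2 * m), show 2 * m - m = m by omega]
  have hfour : (4 : ℝ) ^ m = 2 ^ (2 * m) := by rw [pow_mul]; norm_num
  rw [hcast, hfour, Wallis.W_eq_factorial_ratio]
  field_simp
  ring

lemma centralBinom_div_four_pow_le_one_div_sqrt {m : ℕ} (hm : m ≠ 0) :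
    (m.centralBinom : ℝ) / 4 ^ m ≤ 1 / √(π * m) := by
  rw [one_div, ← sqrt_inv, Real.le_sqrt (by positivity) (by positivity),
    sq_centralBinom_div_four_pow, ← one_div]
  refine one_div_le_one_div_of_le (by positivity) ?_
  have : (0 : ℝ) < m := by positivity
  calc π * m ≤ (2 * m + 1) / (2 * m + 2) * (π / 2) * (2 * m + 1) := by
        rw [div_mul_eq_mul_div, div_mul_eq_mul_div, le_div_iff₀ (by positivity)]
        nlinarith [pi_pos]
    _ ≤ _ := by gcongr; exact Wallis.le_W m

lemma one_div_sqrt_le_centralBinom_div_four_pow (m : ℕ) :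
    1 / √(π * (m + 1 / 2)) ≤ (m.centralBinom : ℝ) / 4 ^ m := by
  rw [one_div, ← sqrt_inv, Real.sqrt_le_left (by positivity), sq_centralBinom_div_four_pow,
    ← one_div]
  refine one_div_le_one_div_of_le (by have := Wallis.W_pos m; positivity) ?_
  calc Wallis.W m * (2 * m + 1) ≤ π / 2 * (2 * m + 1) := by gcongr; exact Wallis.W_le m
    _ = π * (m + 1 / 2) := by ring

lemma abs_centralBinom_div_four_pow_mul_sub_le {k m : ℕ} (hk : k ≠ 0) (hm : m ≠ 0) :
    |(k.centralBinom : ℝ) / 4 ^ k * ((m.centralBinom : ℝ) / 4 ^ m) - 1 / (π * √(k * m))| ≤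
      (2 * (k + m) + 1) / (8 * π * (k * m * √(k * m))) := by
  have upper : (k.centralBinom : ℝ) / 4 ^ k * ((m.centralBinom : ℝ) / 4 ^ m) ≤
      1 / (π * √(k * m)) := by
    rw [← one_div_sqrt_pi_mul_mul_one_div_sqrt_pi_mul k.cast_nonneg]
    exact mul_le_mul (centralBinom_div_four_pow_le_one_div_sqrt hk)
      (centralBinom_div_four_pow_le_one_div_sqrt hm) (by positivity) (by positivity)
  have lower : 1 / (π * √((k + 1 / 2) * (m + 1 / 2))) ≤
      (k.centralBinom : ℝ) / 4 ^ k * ((m.centralBinom : ℝ) / 4 ^ m) := by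
    rw [← one_div_sqrt_pi_mul_mul_one_div_sqrt_pi_mul (by positivity)]
    exact mul_le_mul (one_div_sqrt_le_centralBinom_div_four_pow k)
      (one_div_sqrt_le_centralBinom_div_four_pow m) (by positivity) (by positivity)
  have gap := one_div_sqrt_sub_one_div_sqrt_le (x := k * m) (y := (k + 1 / 2) * (m + 1 / 2))
    (by positivity) (by nlinarith)
  rw [abs_sub_comm, abs_of_nonneg (sub_nonneg.2 upper)]
  calc 1 / (π * √(k * m)) - (k.centralBinom : ℝ) / 4 ^ k * ((m.centralBinom : ℝ) / 4 ^ m)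
      ≤ 1 / π * (1 / √(k * m) - 1 / √((k + 1 / 2) * (m + 1 / 2))) := by
        rw [mul_sub, one_div_mul_one_div, one_div_mul_one_div]; linarith
    _ ≤ 1 / π * (((k + 1 / 2) * (m + 1 / 2) - k * m) / (2 * (k * m * √(k * m)))) :=
        mul_le_mul_of_nonneg_left gap (by positivity)
    _ = (2 * (k + m) + 1) / (8 * π * (k * m * √(k * m))) := by
        field_simp
        ring

end Nat

lemma mul_one_sub_mul_sq_le_mul_sub {δ n k : ℝ} (h₁ : δ * n ≤ k)
    (h₂ : k ≤ (1 - δ) * n) :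
    δ * (1 - δ) * n ^ 2 ≤ k * (n - k) := by
  nlinarith [mul_nonneg (sub_nonneg.2 h₁) (sub_nonneg.2 h₂)]

lemma abs_choose_mul_choose_div_sub_le {δ : ℝ} {n k : ℕ} (hδ : 0 < δ) (hn : n ≠ 0)
    (hk₁ : δ * n ≤ k) (hk₂ : k ≤ (1 - δ) * n) :
    |(Nat.choose (2 * k) k : ℝ) * (Nat.choose (2 * (n - k)) (n - k) : ℝ) / 2 ^ (2 * n) -
        1 / (π * √((k * (n - k) : ℕ) : ℝ))| ≤
      (2 * n + 1) / (8 * π * (δ * (1 - δ) * √(δ * (1 - δ)) * n ^ 3)) := by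
  have hn₀ : (0 : ℝ) < n := by positivity
  have hk₀ : k ≠ 0 := by rintro rfl; push_cast at hk₁; nlinarith
  have hkn : k < n := by exact_mod_cast hk₂.trans_lt (by nlinarith : (1 - δ) * n < n)
  have hδ₁ : δ < 1 := by nlinarith [(by exact_mod_cast hkn : (k : ℝ) < n)]
  have hsub : ((n - k : ℕ) : ℝ) = n - k := Nat.cast_sub hkn.le
  have hp : (Nat.choose (2 * k) k : ℝ) * (Nat.choose (2 * (n - k)) (n - k) : ℝ) / 2 ^ (2 * n) =
      (k.centralBinom : ℝ) / 4 ^ k * (((n - k).centralBinom : ℝ) / 4 ^ (n - k)) := by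
    rw [pow_mul, show (2 : ℝ) ^ 2 = 4 by norm_num, ← Nat.add_sub_cancel' hkn.le, pow_add,
      Nat.add_sub_cancel_left]
    simp only [Nat.centralBinom]
    ring
  rw [hp, Nat.cast_mul]
  refine (Nat.abs_centralBinom_div_four_pow_mul_sub_le hk₀ (by omega)).trans ?_
  rw [hsub, show (2 * (k + (n - k)) + 1 : ℝ) = 2 * n + 1 by ring]
  have hx := mul_one_sub_mul_sq_le_mul_sub hk₁ hk₂
  have : 0 < δ * (1 - δ) := mul_pos hδ (by linarith)
  refine div_le_div_of_nonneg_left (by positivity) (by positivity) ?_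
  gcongr 8 * π * ?_
  calc δ * (1 - δ) * √(δ * (1 - δ)) * n ^ 3
      = δ * (1 - δ) * n ^ 2 * √(δ * (1 - δ) * n ^ 2) := by
        rw [sqrt_mul this.le, sqrt_sq hn₀.le]; ring
    _ ≤ k * (n - k) * √(k * (n - k)) := by
        gcongr; exact (mul_nonneg this.le (sq_nonneg _)).trans hx

lemma rpow_three_halves_eq_mul_sqrt {x : ℝ} (hx : 0 ≤ x) : x ^ ((3 : ℝ) / 2) = x * √x := by
  rw [show (3 : ℝ) / 2 = 1 + 1 / 2 by norm_num, rpow_add' hx (by norm_num), rpow_one,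
    ← sqrt_eq_rpow]

lemma sub_one_mul_div_le_one_div {n c : ℝ} (hn : 1 ≤ n) (hc : 0 < c) :
    (n - 1) * ((2 * n + 1) / (8 * π * (c * n ^ 3))) ≤ 1 / (3 * π * n * c) := by
  have hπcn : 0 < π * c * n := by positivity
  rw [← mul_div_assoc, div_le_div_iff₀ (by positivity) (by positivity)]
  nlinarith [mul_le_mul_of_nonneg_left (by nlinarith : 3 * (n - 1) * (2 * n + 1) ≤ 8 * n ^ 2)
    hπcn.le]

theorem abs_sum_p_sub_sum_d_le_general (δ a b : ℝ) (hδ0 : 0 < δ)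
    (ha : δ ≤ a) (hab : a < b) (hb : b ≤ 1 - δ) (n : ℕ) (hn : 1 ≤ n) :
    |(∑ k ∈ Finset.Icc ⌈a * (n : ℝ)⌉₊ ⌊b * (n : ℝ)⌋₊,
        (Nat.choose (2 * k) k : ℝ) * (Nat.choose (2 * (n - k)) (n - k) : ℝ) / 2 ^ (2 * n)) -
      ∑ k ∈ Finset.Icc ⌈a * (n : ℝ)⌉₊ ⌊b * (n : ℝ)⌋₊,
        1 / (Real.pi * Real.sqrt ((k * (n - k) : ℕ) : ℝ))| ≤
      1 / (3 * Real.pi * n * (δ * (1 - δ)) ^ ((3 : ℝ) / 2)) := by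
  set s := Finset.Icc ⌈a * (n : ℝ)⌉₊ ⌊b * (n : ℝ)⌋₊
  set t := δ * (1 - δ)
  have hn₁ : (1 : ℝ) ≤ n := by exact_mod_cast hn
  have hrange : ∀ k ∈ s, δ * n ≤ k ∧ k ≤ (1 - δ) * n := fun k hk => by
    rw [Finset.mem_Icc, Nat.ceil_le, Nat.le_floor_iff (by nlinarith)] at hk
    exact ⟨by nlinarith, by nlinarith⟩
  have hsub : s ⊆ Finset.Ioo 0 n := fun k hk => by
    obtain ⟨hk₁, hk₂⟩ := hrange k hk
    rw [Finset.mem_Ioo, ← Nat.cast_lt (α := ℝ), ← Nat.cast_lt (α := ℝ), Nat.cast_zero]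
    exact ⟨by nlinarith, by nlinarith⟩
  have hcard : (s.card : ℝ) ≤ n - 1 := by
    rw [← Nat.cast_pred hn]
    exact_mod_cast (by simpa using Finset.card_le_card hsub : s.card ≤ n - 1)
  have ht : 0 < t := mul_pos hδ0 (by linarith)
  rw [← Finset.sum_sub_distrib, rpow_three_halves_eq_mul_sqrt ht.le]
  calc _ ≤ ∑ k ∈ s, |(Nat.choose (2 * k) k : ℝ) * (Nat.choose (2 * (n - k)) (n - k) : ℝ) /
          2 ^ (2 * n) - 1 / (π * √((k * (n - k) : ℕ) : ℝ))| := Finset.abs_sum_le_sum_abs _ _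
    _ ≤ s.card * ((2 * n + 1) / (8 * π * (t * √t * n ^ 3))) := by
        simpa using Finset.sum_le_card_nsmul s _ _ fun k hk =>
          abs_choose_mul_choose_div_sub_le hδ0 (by omega) (hrange k hk).1 (hrange k hk).2
    _ ≤ (n - 1) * ((2 * n + 1) / (8 * π * (t * √t * n ^ 3))) := by gcongr
    _ ≤ 1 / (3 * π * n * (t * √t)) := sub_one_mul_div_le_one_div hn₁ (by positivity)

/-- For `0 < δ ≤ 1/2`, reals `δ ≤ a < b ≤ 1 - δ` and an integer `n ≥ 1`,
`|Σ_{a ≤ k/n ≤ b} p_{2k,2n} - Σ_{a ≤ k/n ≤ b} d_{k,n}| ≤ 1/(3πn(δ(1-δ))^{3/2})`,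
where the sums range over integers `k` with `a·n ≤ k ≤ b·n`. -/
theorem abs_sum_p_sub_sum_d_le (δ a b : ℝ) (hδ0 : 0 < δ) (hδ : δ ≤ 1 / 2)
    (ha : δ ≤ a) (hab : a < b) (hb : b ≤ 1 - δ) (n : ℕ) (hn : 1 ≤ n) :
    |(∑ k ∈ Finset.Icc ⌈a * (n : ℝ)⌉₊ ⌊b * (n : ℝ)⌋₊,
        (Nat.choose (2 * k) k : ℝ) * (Nat.choose (2 * (n - k)) (n - k) : ℝ) / 2 ^ (2 * n)) -
      ∑ k ∈ Finset.Icc ⌈a * (n : ℝ)⌉₊ ⌊b * (n : ℝ)⌋₊,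
        1 / (Real.pi * Real.sqrt ((k * (n - k) : ℕ) : ℝ))| ≤
      1 / (3 * Real.pi * n * (δ * (1 - δ)) ^ ((3 : ℝ) / 2)) :=
  abs_sum_p_sub_sum_d_le_general δ a b hδ0 ha hab hb n hn
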